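/- arXiv:1503.04295 — 6 statements merged into one kernel-verified Lean document; each statement's English description precedes it below -/
import Mathlib

section
/- If C is a semidualizing R-module over a commutative Noetherian ring R and p is a prime ideal, then Hom_R(C, E_R(R/p)) has the t(p)-property: each r ∈ R \ p acts on it as an isomorphism, and every element is annihilated by some power of p. -/
open CategoryTheory

universe u

variable (R : Type u) [CommRing R]

/-- `M` has the `t(p)`-property. -/
def HasTProperty (p : Ideal R) (M : Type u) [AddCommGroup M] [Module R M] : Prop :=
  (∀ r : R, r ∉ p → Function.Bijective (fun x : M => r • x)) ∧
    ∀ x : M, ∃ m : ℕ, 1 ≤ m ∧ ∀ a ∈ p ^ m, a • x = 0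

/-- `E` is an injective envelope of `M`. -/
def IsInjectiveEnvelope (M E : Type u) [AddCommGroup M] [Module R M]
    [AddCommGroup E] [Module R E] : Prop :=
  Module.Injective R E ∧ ∃ f : M →ₗ[R] E, Function.Injective f ∧
    ∀ N : Submodule R E, N ≠ ⊥ → N ⊓ LinearMap.range f ≠ ⊥

/-- `C` is a semidualizing `R`-module. -/
def IsSemidualizing (C : Type u) [AddCommGroup C] [Module R C] : Prop :=
  Module.Finite R C ∧ Function.Bijective (LinearMap.lsmul R C) ∧
    ∀ i : ℕ, 0 < i → Subsingleton
      (((Ext R (ModuleCat.{u} R) i).obj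
        (Opposite.op (ModuleCat.of R C))).obj (ModuleCat.of R C))

/-- `C` has finite injective dimension over `R`. -/
def HasFiniteInjectiveDimension (C : Type u) [AddCommGroup C] [Module R C] : Prop :=
  ∃ n : ℕ, ∀ (N : ModuleCat.{u} R) (i : ℕ), n < i →
    Subsingleton (((Ext R (ModuleCat.{u} R) i).obj (Opposite.op N)).obj (ModuleCat.of R C))

/-- `C` is a dualizing `R`-module. -/
def IsDualizing (C : Type u) [AddCommGroup C] [Module R C] : Prop :=
  IsSemidualizing R C ∧ HasFiniteInjectiveDimension R C

/-- `M` is `C`-injective. -/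
def IsCInjective (C : Type u) [AddCommGroup C] [Module R C]
    (M : Type u) [AddCommGroup M] [Module R M] : Prop :=
  ∃ (I : Type u) (_ : AddCommGroup I) (_ : Module R I),
    Module.Injective R I ∧ Nonempty (M ≃ₗ[R] (C →ₗ[R] I))

/-- `Tor_i^R(M,N)` as a module category object. -/
noncomputable def TorMod (i : ℕ) (M N : Type u) [AddCommGroup M] [Module R M]
    [AddCommGroup N] [Module R N] : ModuleCat.{u} R :=
  ((Tor (ModuleCat.{u} R) i).obj (ModuleCat.of R M)).obj (ModuleCat.of R N)

/-- The Krull dimension of a module, as dimension of `R ⧸ Ann M`. -/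
noncomputable def moduleKrullDim (M : Type u) [AddCommGroup M] [Module R M] :
    WithBot (WithTop ℕ) :=
  ringKrullDim (R ⧸ Module.annihilator R M)

/-!
Let `f : R/p ↪ E` be the injective envelope. For `r ∉ p`, multiplication by `r` is injective on
the domain `R/p`, hence on `E` because every nonzero submodule of `E` meets `R/p`. Injectivity
of `E` gives a left inverse `ψ` of it, which is again injective by essentiality; so `r` is
bijective on `E`, and then on `Hom(C, E)`. For `s ∈ p` and `x ∈ E` the annihilators of `sⁿ x`
stabilise; if `sⁿ x ≠ 0`, some multiple `t sⁿ x` is a nonzero element of `R/p`, hence killed by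
`s`, so `t` kills `sⁿ⁺¹ x` but not `sⁿ x`. Thus `p ⊆ √ann x`, and as `C` is finitely generated
`p ⊆ √ann g` for every `g : C → E`; finite generation of `p` then gives `pⁿ g = 0`.
-/

namespace LinearMap

variable {R : Type*} {M E : Type*} [CommRing R] [AddCommGroup M] [Module R M]
  [AddCommGroup E] [Module R E]

/-- The essentiality clause of `IsInjectiveEnvelope`; `f` need not be injective. -/
def IsEssential (f : M →ₗ[R] E) : Prop :=
  ∀ N : Submodule R E, N ≠ ⊥ → N ⊓ LinearMap.range f ≠ ⊥

namespace IsEssential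

variable {f : M →ₗ[R] E}

theorem injective_of_injective_comp (hf : f.IsEssential) {φ : E →ₗ[R] E}
    (hφf : Function.Injective (φ ∘ₗ f)) : Function.Injective φ := by
  rw [← ker_eq_bot]
  by_contra h
  refine hf _ h ((Submodule.eq_bot_iff _).mpr ?_)
  rintro _ ⟨hx, a, rfl⟩
  rw [hφf (show φ (f a) = φ (f 0) by simpa using hx), map_zero]

theorem exists_smul_mem_range_ne_zero (hf : f.IsEssential) {y : E} (hy : y ≠ 0) :
    ∃ r : R, r • y ∈ range f ∧ r • y ≠ 0 := by
  obtain ⟨z, ⟨hzy, hzf⟩, hz⟩ := Submodule.exists_mem_ne_zero_of_ne_bot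
    (hf _ (mt Submodule.span_singleton_eq_bot.mp hy))
  obtain ⟨r, rfl⟩ := Submodule.mem_span_singleton.mp hzy
  exact ⟨r, hzf, hz⟩

theorem isSMulRegular (hf : f.IsEssential) (hinj : Function.Injective f) {r : R}
    (hr : IsSMulRegular M r) : IsSMulRegular E r :=
  hf.injective_of_injective_comp (φ := lsmul R E r) <| by
    simpa [Function.comp_def] using hinj.comp hr

theorem smul_bijective [Module.Injective R E] (hf : f.IsEssential) (hinj : Function.Injective f)
    {r : R} (hr : IsSMulRegular M r) : Function.Bijective (fun x : E => r • x) := by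
  have hrE := hf.isSMulRegular hinj hr
  obtain ⟨ψ, hψ⟩ := Module.Injective.out (lsmul R E r) hrE LinearMap.id
  have hψr : ∀ x, ψ (r • x) = x := hψ
  have hψinj : Function.Injective ψ := hf.injective_of_injective_comp <| by
    intro a b hab
    apply hinj
    rw [← hψr (f a), ← hψr (f b), map_smul, map_smul]
    exact congrArg (r • ·) hab
  refine ⟨hrE, fun y => ⟨ψ y, hψinj ?_⟩⟩
  simp only [hψr]

theorem le_radical_torsionOf [IsNoetherianRing R] (hf : f.IsEssential) {I : Ideal R}
    (hI : I ≤ Module.annihilator R M) (x : E) : I ≤ (Ideal.torsionOf R E x).radical := by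
  intro s hs
  let J : ℕ →o Ideal R :=
    ⟨fun n => Ideal.torsionOf R E (s ^ n • x), fun a b hab c hc => by
      obtain ⟨k, rfl⟩ := Nat.exists_eq_add_of_le hab
      simp only [Ideal.mem_torsionOf_iff] at hc ⊢
      rw [pow_add, mul_comm, mul_smul, smul_comm, hc, smul_zero]⟩
  obtain ⟨n, hn⟩ := monotone_stabilizes_iff_noetherian.mpr inferInstance J
  refine ⟨n, (Ideal.mem_torsionOf_iff _ _).mpr ?_⟩
  by_contra hy
  obtain ⟨r, ⟨a, ha⟩, hr⟩ := hf.exists_smul_mem_range_ne_zero hy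
  have hrJ : r ∈ J (n + 1) := by
    have hsa : s • f a = 0 := by rw [← map_smul, Module.mem_annihilator.mp (hI hs), map_zero]
    rw [ha, smul_comm] at hsa
    show r ∈ Ideal.torsionOf R E (s ^ (n + 1) • x)
    rwa [Ideal.mem_torsionOf_iff, pow_succ', mul_smul]
  rw [← hn _ n.le_succ] at hrJ
  exact hr ((Ideal.mem_torsionOf_iff _ _).mp hrJ)

end IsEssential

end LinearMap

section Hom

variable {R C E : Type*} [CommRing R] [AddCommGroup C] [Module R C] [AddCommGroup E] [Module R E]

theorem LinearMap.bijective_smul_of_bijective_smul {r : R}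
    (hr : Function.Bijective (fun x : E => r • x)) :
    Function.Bijective (fun g : C →ₗ[R] E => r • g) :=
  (LinearEquiv.congrRight (M := C) (LinearEquiv.ofBijective (LinearMap.lsmul R E r) hr)).bijective

theorem Ideal.le_radical_torsionOf_linearMap [Module.Finite R C] {I : Ideal R}
    (hI : ∀ x : E, I ≤ (Ideal.torsionOf R E x).radical) (g : C →ₗ[R] E) :
    I ≤ (Ideal.torsionOf R (C →ₗ[R] E) g).radical := by
  obtain ⟨S, hS⟩ := Module.Finite.fg_top (R := R) (M := C)
  let J (c : C) : Ideal R := Ideal.torsionOf R E (g c)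
  have hinf : S.inf J ≤ Ideal.torsionOf R (C →ₗ[R] E) g := fun a ha =>
    (Ideal.mem_torsionOf_iff _ _).mpr <| LinearMap.ext_on hS fun c hc => by
      simpa [J, Ideal.mem_torsionOf_iff] using Finset.inf_le (f := J) hc ha
  calc I ≤ S.inf (Ideal.radical ∘ J) := Finset.le_inf fun c _ => hI (g c)
    _ = (S.inf J).radical := (map_finset_inf Ideal.radicalInfTopHom S J).symm
    _ ≤ _ := Ideal.radical_mono hinf

end Hom

theorem Ideal.Quotient.isSMulRegular_of_notMem {R : Type*} [CommRing R] {p : Ideal R}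
    (hp : p.IsPrime) {r : R} (hr : r ∉ p) : IsSMulRegular (R ⧸ p) r :=
  (isSMulRegular_quotient_iff_mem_of_smul_mem p r).mpr
    fun _ hx => (hp.mem_or_mem hx).resolve_left hr

theorem stmt0 [IsNoetherianRing R] (C : Type u) [AddCommGroup C] [Module R C]
    (hC : IsSemidualizing R C) (p : Ideal R) (hp : p.IsPrime)
    (E : Type u) [AddCommGroup E] [Module R E]
    (hE : IsInjectiveEnvelope R (R ⧸ p) E) :
    HasTProperty R p (C →ₗ[R] E) := by
  obtain ⟨hinj, f, hf, hess : f.IsEssential⟩ := hE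
  refine ⟨fun r hr => LinearMap.bijective_smul_of_bijective_smul
    (hess.smul_bijective hf (Ideal.Quotient.isSMulRegular_of_notMem hp hr)), fun g => ?_⟩
  have : Module.Finite R C := hC.1
  obtain ⟨n, hn⟩ := Ideal.exists_pow_le_of_le_radical_of_fg
    (Ideal.le_radical_torsionOf_linearMap
      (hess.le_radical_torsionOf Ideal.annihilator_quotient.ge) g)
    (IsNoetherian.noetherian p)
  exact ⟨n + 1, Nat.le_add_left 1 n,
    fun a ha => (Ideal.mem_torsionOf_iff _ _).mp (hn (Ideal.pow_le_pow_right n.le_succ ha))⟩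
end

section
/- If M is an R-module with t(p)-property for a prime p, then for every finitely generated R-module N, the module Hom_R(N, M) also has the t(p)-property. -/
open CategoryTheory

universe u

variable (R : Type u) [CommRing R]

theorem stmt1 [IsNoetherianRing R] (p : Ideal R) (hp : p.IsPrime)
    (M : Type u) [AddCommGroup M] [Module R M] (hM : HasTProperty R p M)
    (N : Type u) [AddCommGroup N] [Module R N] [Module.Finite R N] :
    HasTProperty R p (N →ₗ[R] M) := by
  obtain ⟨hbij, hann⟩ := hM
  constructor
  · intro r hr
    let e : M ≃ₗ[R] M := LinearEquiv.ofBijective (LinearMap.lsmul R M r) (hbij r hr)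
    constructor
    · intro f g hfg
      ext x
      have : r • f x = r • g x := by
        simpa using congrArg (fun h : N →ₗ[R] M => h x) hfg
      exact (hbij r hr).1 this
    · intro f
      refine ⟨e.symm.toLinearMap.comp f, ?_⟩
      ext x
      simp only [LinearMap.smul_apply, LinearMap.coe_comp, Function.comp_apply,
        LinearEquiv.coe_coe]
      exact e.apply_symm_apply (f x)
  · intro f
    obtain ⟨s, hs⟩ := Module.Finite.fg_top (R := R) (M := N)
    classical
    choose mm hmm1 hmm2 using fun x : N => hann (f x)
    refine ⟨1 + s.sup mm, le_add_right le_rfl, ?_⟩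
    intro a ha
    have key : ∀ x ∈ (s : Set N), a • f x = 0 := by
      intro x hx
      have hle : p ^ (1 + s.sup mm) ≤ p ^ (mm x) := by
        apply Ideal.pow_le_pow_right
        exact le_trans (Finset.le_sup hx) (le_add_self)
      exact hmm2 x a (hle ha)
    apply LinearMap.ext_on hs
    intro x hx
    simpa using key x hx
end

section
/- Let (R, m, k) be a Noetherian local ring and C a semidualizing R-module. If I is an Artinian C-injective R-module, written I = Hom_R(C, I') with I' injective, then I' is Artinian, hence a finite direct sum of copies of E_R(k). -/
open CategoryTheory

universe u

variable (R : Type u) [CommRing R]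

/-! Since `C` is finite and faithful, `R` embeds into some `Cⁿ`; as `I'` is injective,
`Hom(Cⁿ, I') → Hom(R, I') ≅ I'` is surjective, so `I'` is a quotient of the Artinian module
`Hom(C, I')ⁿ`. In the Artinian module `I'` the socle `S ≅ kⁿ` is essential, and `kⁿ ↪ Eⁿ` is an
essential extension. Extending `S → Eⁿ` to `h : I' → Eⁿ` by injectivity of `Eⁿ` gives a map that
is injective (its kernel misses the essential `S`) and surjective (a retraction of `h`, which
exists as `I'` is injective, kills nothing of the essential image of `h`). -/

open IsLocalRing Submodule

universe v

theorem LinearMap.range_piMap {R ι : Type*} [Semiring R] {M N : ι → Type*}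
    [∀ i, AddCommMonoid (M i)] [∀ i, Module R (M i)] [∀ i, AddCommMonoid (N i)]
    [∀ i, Module R (N i)] (f : ∀ i, M i →ₗ[R] N i) :
    range (piMap f) = Submodule.pi Set.univ fun i => range (f i) := by
  ext y
  simp only [mem_range, Submodule.mem_pi, Set.mem_univ, forall_const, coe_piMap]
  constructor
  · rintro ⟨x, rfl⟩ i
    exact ⟨x i, rfl⟩
  · intro hy
    choose x hx using hy
    exact ⟨x, funext hx⟩

def Submodule.IsEssential {R M : Type*} [Semiring R] [AddCommMonoid M] [Module R M]
    (V : Submodule R M) : Prop :=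
  ∀ N : Submodule R M, N ≠ ⊥ → N ⊓ V ≠ ⊥

section Essential

variable {R : Type*} [Ring R] {M N : Type*} [AddCommGroup M] [Module R M]
  [AddCommGroup N] [Module R N]

theorem Submodule.isEssential_iff {V : Submodule R M} :
    V.IsEssential ↔ ∀ x : M, x ≠ 0 → ∃ r : R, r • x ≠ 0 ∧ r • x ∈ V := by
  constructor
  · intro hV x hx
    have hspan : span R {x} ≠ ⊥ := by simpa [span_singleton_eq_bot] using hx
    obtain ⟨y, hy, hy0⟩ := (Submodule.ne_bot_iff _).mp (hV _ hspan)
    obtain ⟨hyx, hyV⟩ := mem_inf.mp hy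
    obtain ⟨r, rfl⟩ := mem_span_singleton.mp hyx
    exact ⟨r, hy0, hyV⟩
  · intro hV N hN
    obtain ⟨x, hxN, hx0⟩ := (Submodule.ne_bot_iff _).mp hN
    obtain ⟨r, hr0, hrV⟩ := hV x hx0
    exact (Submodule.ne_bot_iff _).mpr ⟨r • x, mem_inf.mpr ⟨N.smul_mem r hxN, hrV⟩, hr0⟩

theorem Submodule.IsEssential.mono {V W : Submodule R M} (hV : V.IsEssential) (hVW : V ≤ W) :
    W.IsEssential :=
  fun N hN => ne_bot_of_le_ne_bot (hV N hN) (inf_le_inf_left N hVW)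

theorem Submodule.IsEssential.pi {ι : Type*} [Finite ι] {M : ι → Type*}
    [∀ i, AddCommGroup (M i)] [∀ i, Module R (M i)] {V : ∀ i, Submodule R (M i)}
    (hV : ∀ i, (V i).IsEssential) : (Submodule.pi Set.univ V).IsEssential := by
  classical
  have := Fintype.ofFinite ι
  refine isEssential_iff.mpr fun x hx => ?_
  suffices ∀ s : Finset ι, ∃ r : R, r • x ≠ 0 ∧ ∀ i ∈ s, r • x i ∈ V i by
    obtain ⟨r, hr0, hrV⟩ := this Finset.univ
    exact ⟨r, hr0, fun i _ => hrV i (Finset.mem_univ i)⟩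
  intro s
  induction s using Finset.induction_on with
  | empty => exact ⟨1, by simpa using hx, by simp⟩
  | insert j s _ ih =>
    obtain ⟨r, hr0, hrV⟩ := ih
    by_cases hj : r • x j ∈ V j
    · exact ⟨r, hr0, Finset.forall_mem_insert _ _ _ |>.mpr ⟨hj, hrV⟩⟩
    obtain ⟨t, ht0, htV⟩ :=
      isEssential_iff.mp (hV j) (r • x j) fun h => hj (h ▸ zero_mem _)
    refine ⟨t * r, fun h => ht0 ?_, Finset.forall_mem_insert _ _ _ |>.mpr
      ⟨by rwa [mul_smul], fun i hi => by rw [mul_smul]; exact smul_mem _ t (hrV i hi)⟩⟩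
    simpa [mul_smul] using congrFun h j

theorem LinearMap.injective_of_isEssential {f : M →ₗ[R] N} {V : Submodule R M}
    (hV : V.IsEssential) (hf : Function.Injective (f ∘ₗ V.subtype)) : Function.Injective f := by
  rw [← ker_eq_bot]
  by_contra hker
  obtain ⟨x, hx, hx0⟩ := (Submodule.ne_bot_iff _).mp (hV _ hker)
  obtain ⟨hxf, hxV⟩ := mem_inf.mp hx
  have : (⟨x, hxV⟩ : V) = 0 := hf (by simpa using hxf)
  exact hx0 (congrArg Subtype.val this)

theorem LinearMap.surjective_of_isEssential_range {M N : Type v} [AddCommGroup M] [Module R M]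
    [AddCommGroup N] [Module R N] (hM : Module.Injective R M) {f : M →ₗ[R] N}
    (hf : Function.Injective f) (hess : (range f).IsEssential) : Function.Surjective f := by
  obtain ⟨π, hπf⟩ := hM.out f hf LinearMap.id
  have hπ : Function.Injective π := by
    refine injective_of_isEssential hess ?_
    rintro ⟨_, m, rfl⟩ ⟨_, m', rfl⟩ h
    simp only [coe_comp, coe_subtype, Function.comp_apply, hπf, id_apply] at h
    rw [h]
  exact fun y => ⟨π y, hπ (hπf (π y))⟩

end Essential

section Socle

variable {R : Type*} [CommRing R] [IsLocalRing R] {M : Type*} [AddCommGroup M] [Module R M]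
  [IsArtinian R M]

theorem IsLocalRing.isEssential_torsionBySet_maximalIdeal :
    (torsionBySet R M (maximalIdeal R)).IsEssential := by
  intro N hN
  obtain ⟨P, hP, hPN⟩ := (eq_bot_or_exists_atom_le N).resolve_left hN
  have : IsSimpleModule R P := isSimpleModule_iff_isAtom.mpr hP
  have hann : Module.annihilator R P = maximalIdeal R :=
    eq_maximalIdeal IsSimpleModule.annihilator_isMaximal
  refine ne_bot_of_le_ne_bot hP.1 (le_inf hPN fun x hx => ?_)
  rw [mem_torsionBySet_iff]
  rintro ⟨a, ha⟩
  rw [SetLike.mem_coe, ← hann, Module.mem_annihilator] at ha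
  simpa using ha ⟨x, hx⟩

theorem IsLocalRing.exists_linearEquiv_torsionBySet_maximalIdeal :
    ∃ n : ℕ, Nonempty (torsionBySet R M (maximalIdeal R) ≃ₗ[R] (Fin n → ResidueField R)) := by
  -- `ResidueField R` is a non-reducible alias of `R ⧸ maximalIdeal R`
  let _ : Module (ResidueField R) (torsionBySet R M (maximalIdeal R)) :=
    (inferInstance : Module (R ⧸ maximalIdeal R) (torsionBySet R M (maximalIdeal R)))
  have : IsScalarTower R (ResidueField R) (torsionBySet R M (maximalIdeal R)) :=
    (inferInstance : IsScalarTower R (R ⧸ maximalIdeal R) (torsionBySet R M (maximalIdeal R)))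
  have : IsArtinian (ResidueField R) (torsionBySet R M (maximalIdeal R)) :=
    isArtinian_of_tower R inferInstance
  have : Module.Finite (ResidueField R) (torsionBySet R M (maximalIdeal R)) :=
    IsSemiprimaryRing.finite_of_isArtinian _ (ResidueField R) _
  exact ⟨_, ⟨(Module.finBasis (ResidueField R) _).equivFun.restrictScalars R⟩⟩

end Socle

section Artinian

variable {R : Type u} [CommRing R] {C I : Type u} [AddCommGroup C] [Module R C]
  [AddCommGroup I] [Module R I]

theorem Module.Finite.exists_injective_pi_of_injective_lsmul [Module.Finite R C]
    (hC : Function.Injective (LinearMap.lsmul R C)) :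
    ∃ (n : ℕ) (φ : R →ₗ[R] (Fin n → C)), Function.Injective φ := by
  obtain ⟨n, v, hv⟩ := Module.Finite.exists_fin (R := R) (M := C)
  refine ⟨n, LinearMap.pi fun i => LinearMap.toSpanSingleton R C (v i),
    (injective_iff_map_eq_zero _).mpr fun r hr => hC ?_⟩
  have hr : r ∈ (span R (Set.range v)).annihilator := by
    rw [mem_annihilator_span]
    rintro ⟨_, i, rfl⟩
    exact congrFun hr i
  rw [hv, annihilator_top, Module.mem_annihilator] at hr
  ext c
  simp [hr c]

theorem isArtinian_of_isArtinian_linearMap_of_injective [Module.Finite R C]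
    (hC : Function.Injective (LinearMap.lsmul R C)) (hI : Module.Injective R I)
    [IsArtinian R (C →ₗ[R] I)] : IsArtinian R I := by
  obtain ⟨n, φ, hφ⟩ := Module.Finite.exists_injective_pi_of_injective_lsmul hC
  have : IsArtinian R ((Fin n → C) →ₗ[R] I) :=
    (LinearMap.lsum R (fun _ => C) R).isArtinian_iff.mp inferInstance
  have hsurj : Function.Surjective (LinearMap.lcomp R I φ) := fun g =>
    let ⟨h, hh⟩ := hI.out φ hφ g
    ⟨h, LinearMap.ext hh⟩
  have : IsArtinian R (R →ₗ[R] I) := isArtinian_of_surjective _ _ hsurj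
  exact (LinearMap.ringLmapEquivSelf R R I).isArtinian_iff.mp this

end Artinian

theorem IsLocalRing.exists_linearEquiv_pi_of_isInjectiveEnvelope {R : Type u} [CommRing R]
    [IsLocalRing R] {I E : Type u} [AddCommGroup I] [Module R I] [AddCommGroup E] [Module R E]
    (hI : Module.Injective R I) [IsArtinian R I]
    (hE : IsInjectiveEnvelope R (ResidueField R) E) :
    ∃ n : ℕ, Nonempty (I ≃ₗ[R] (Fin n → E)) := by
  obtain ⟨hEinj, f, hf, hfess⟩ := hE
  obtain ⟨n, ⟨e⟩⟩ := exists_linearEquiv_torsionBySet_maximalIdeal (R := R) (M := I)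
  set S := torsionBySet R I (maximalIdeal R)
  let g : S →ₗ[R] (Fin n → E) := LinearMap.piMap (fun _ => f) ∘ₗ e
  have hg : Function.Injective g := (Function.Injective.piMap fun _ => hf).comp e.injective
  have hgess : (LinearMap.range g).IsEssential := by
    have : LinearMap.range g = Submodule.pi Set.univ fun _ => LinearMap.range f := by
      rw [LinearMap.range_comp, e.range, Submodule.map_top, LinearMap.range_piMap]
    exact this ▸ IsEssential.pi fun _ => hfess
  have : Module.Injective R E := hEinj
  obtain ⟨h, hh⟩ := Module.Injective.out S.subtype S.injective_subtype g
  have hhg : h ∘ₗ S.subtype = g := LinearMap.ext hh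
  have hinj : Function.Injective h :=
    LinearMap.injective_of_isEssential isEssential_torsionBySet_maximalIdeal (hhg ▸ hg)
  have hsurj : Function.Surjective h :=
    LinearMap.surjective_of_isEssential_range hI hinj
      (hgess.mono (hhg ▸ LinearMap.range_comp_le_range _ _))
  exact ⟨n, ⟨LinearEquiv.ofBijective h ⟨hinj, hsurj⟩⟩⟩

theorem stmt4 [IsLocalRing R]
    (C : Type u) [AddCommGroup C] [Module R C] (hC : IsSemidualizing R C)
    (I' : Type u) [AddCommGroup I'] [Module R I'] (hI' : Module.Injective R I')
    (hart : IsArtinian R (C →ₗ[R] I'))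
    (E : Type u) [AddCommGroup E] [Module R E]
    (hE : IsInjectiveEnvelope R (IsLocalRing.ResidueField R) E) :
    IsArtinian R I' ∧ ∃ n : ℕ, Nonempty (I' ≃ₗ[R] (Fin n → E)) := by
  obtain ⟨hfin, hlsmul, -⟩ := hC
  have : IsArtinian R I' := isArtinian_of_isArtinian_linearMap_of_injective hlsmul.injective hI'
  exact ⟨this, exists_linearEquiv_pi_of_isInjectiveEnvelope hI' hE⟩
end

section
/- Let C be a semidualizing R-module and r_1, ..., r_n a sequence of elements of R. Then r_1, ..., r_n is a regular R-sequence if and only if it is a regular C-sequence. -/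
open CategoryTheory

universe u

variable (R : Type u) [CommRing R]

/-! Induct along the sequence, carrying for `I = (r₁, …, rᵢ)` the invariant that the homotheties
give `R ⧸ I ≅ Hom_R(C, C ⧸ IC)` and that `Ext^{>0}_R(C, C ⧸ IC) = 0`; the long exact `Ext`
sequence of `0 → C ⧸ IC → C ⧸ IC → C ⧸ (I, r)C → 0` carries it from `I` to `I + (r)` when `r` is
regular on `C ⧸ IC`. Under the invariant, `M = C ⧸ IC` is finitely generated with annihilator `I`
and only homotheties as endomorphisms. If `r` kills `x ≠ 0` in `M`, then `r` lies in an associated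
prime `p` of `M`; composing a nonzero `M → R ⧸ p` (it exists since `p ⊇ Ann M`) with `R ⧸ p ↪ M`
gives a homothety `s ∉ I` with `rs ∈ I`. So `r` is regular on `R ⧸ I` iff it is regular on `M`.
Finally `IC = C` iff `I = R` by Nakayama, `C` being faithful. -/

open CategoryTheory.Limits
open scoped nonZeroDivisors

theorem Module.exists_linearMap_ne_zero_of_not_isTorsion {D N : Type*} [CommRing D] [IsDomain D]
    [AddCommGroup N] [Module D N] [Module.Finite D N] (h : ¬ Module.IsTorsion D N) :
    ∃ ψ : N →ₗ[D] D, ψ ≠ 0 := by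
  let K := FractionRing D
  obtain ⟨z, hz⟩ : ∃ z : N, ∀ a : D⁰, a • z ≠ 0 := by
    simpa [Module.IsTorsion] using h
  have hv : LocalizedModule.mkLinearMap D⁰ N z ≠ 0 := fun h0 => by
    obtain ⟨a, ha⟩ := (IsLocalizedModule.eq_zero_iff D⁰ _).mp h0
    exact hz a ha
  obtain ⟨l, hl⟩ := Module.Projective.exists_dual_ne_zero K hv
  let ψK : N →ₗ[D] K := l.restrictScalars D ∘ₗ LocalizedModule.mkLinearMap D⁰ N
  obtain ⟨t, ht⟩ := Module.Finite.fg_top (R := D) (M := N)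
  obtain ⟨b, hb⟩ := IsLocalization.exist_integer_multiples D⁰ t ψK
  have hle : LinearMap.range ((b : D) • ψK) ≤ LinearMap.range (Algebra.linearMap D K) := by
    rw [LinearMap.range_eq_map, ← ht, Submodule.map_span_le]
    exact fun n hn => hb n hn
  have inj : Function.Injective (Algebra.linearMap D K) := IsFractionRing.injective D K
  refine ⟨(LinearEquiv.ofInjective _ inj).symm.toLinearMap ∘ₗ
    ((b : D) • ψK).codRestrict _ (fun n => hle ⟨n, rfl⟩), fun hψ => ?_⟩
  exact hl (by simpa [ψK] using congrArg (fun f => (LinearEquiv.ofInjective _ inj (f z) : K)) hψ)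

section Annihilator

variable {R} {M : Type*} [AddCommGroup M] [Module R M]

theorem Module.exists_linearMap_quotient_ne_zero [Module.Finite R M] (P : Ideal R) [P.IsPrime]
    (hP : Module.annihilator R M ≤ P) : ∃ φ : M →ₗ[R] R ⧸ P, φ ≠ 0 := by
  let N := M ⧸ (P • ⊤ : Submodule R M)
  have : Module.Finite (R ⧸ P) N := Module.Finite.of_restrictScalars_finite R _ _
  have hann : Module.annihilator R N ≤ P := by
    have hsupp : (⟨P, inferInstance⟩ : PrimeSpectrum R) ∈ Module.support R N := by
      rw [Module.support_quotient]
      exact ⟨Module.mem_support_iff_of_finite.mpr hP, (PrimeSpectrum.mem_zeroLocus _ _).mpr le_rfl⟩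
    exact Module.mem_support_iff_of_finite.mp hsupp
  have hN : ¬ Module.IsTorsion (R ⧸ P) N := fun htors => by
    obtain ⟨d, hd, hdreg⟩ := Submodule.annihilator_top_inter_nonZeroDivisors htors
    obtain ⟨b, rfl⟩ := Ideal.Quotient.mk_surjective d
    have hb : b ∈ Module.annihilator R N := by
      refine Module.mem_annihilator.mpr fun x => ?_
      have hx := Submodule.mem_annihilator.mp hd x Submodule.mem_top
      rwa [← Ideal.Quotient.algebraMap_eq, algebraMap_smul] at hx
    exact nonZeroDivisors.coe_ne_zero ⟨_, hdreg⟩ (Ideal.Quotient.eq_zero_iff_mem.mpr (hann hb))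
  obtain ⟨ψ, hψ⟩ := Module.exists_linearMap_ne_zero_of_not_isTorsion hN
  refine ⟨ψ.restrictScalars R ∘ₗ (P • ⊤ : Submodule R M).mkQ,
    fun h0 => hψ (LinearMap.ext fun x => ?_)⟩
  obtain ⟨m, rfl⟩ := Submodule.mkQ_surjective _ x
  exact LinearMap.congr_fun h0 m

theorem isSMulRegular_of_isSMulRegular_quotient_annihilator [IsNoetherianRing R]
    [Module.Finite R M] (hM : Function.Surjective (LinearMap.lsmul R M)) {r : R}
    (hr : IsSMulRegular (R ⧸ Module.annihilator R M) r) : IsSMulRegular M r := by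
  refine isSMulRegular_iff_right_eq_zero_of_smul.mpr fun x hx => ?_
  by_contra hx0
  obtain ⟨P, hP, hxP⟩ := exists_le_isAssociatedPrime_of_isNoetherianRing R x hx0
  have hrP : r ∈ P := hxP (by simpa [Submodule.mem_colon_singleton] using hx)
  obtain ⟨_, ι, hι⟩ := (isAssociatedPrime_iff_exists_injective_linearMap P M).mp hP
  obtain ⟨φ, hφ⟩ := Module.exists_linearMap_quotient_ne_zero P
    (Submodule.annihilator_top (R := R) (M := M) ▸ hP.annihilator_le)
  obtain ⟨s, hs⟩ := hM (ι ∘ₗ φ)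
  have hsann : s ∉ Module.annihilator R M := fun hann => hφ <| LinearMap.ext fun m => by
    rw [LinearMap.zero_apply, ← map_eq_zero_iff ι hι, ← LinearMap.comp_apply, ← hs,
      LinearMap.lsmul_apply, Module.mem_annihilator.mp hann m]
  have hrsann : r * s ∈ Module.annihilator R M := Module.mem_annihilator.mpr fun m => by
    rw [mul_smul, ← LinearMap.lsmul_apply (R := R) s m, hs, LinearMap.comp_apply, ← map_smul,
      Module.mem_annihilator.mp ((Ideal.annihilator_quotient (I := P)).symm ▸ hrP), map_zero]
  exact hsann ((isSMulRegular_quotient_iff_mem_of_smul_mem _ r).mp hr s hrsann)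

theorem IsSMulRegular.quotient_annihilator {r : R} (h : IsSMulRegular M r) :
    IsSMulRegular (R ⧸ Module.annihilator R M) r :=
  (isSMulRegular_quotient_iff_mem_of_smul_mem _ r).mpr fun x hx =>
    Module.mem_annihilator.mpr fun m => h.right_eq_zero_of_smul <| by
      rw [smul_smul, ← smul_eq_mul, Module.mem_annihilator.mp hx m]

theorem isSMulRegular_quotient_annihilator_iff [IsNoetherianRing R] [Module.Finite R M]
    (hM : Function.Surjective (LinearMap.lsmul R M)) (r : R) :
    IsSMulRegular (R ⧸ Module.annihilator R M) r ↔ IsSMulRegular M r :=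
  ⟨isSMulRegular_of_isSMulRegular_quotient_annihilator hM, IsSMulRegular.quotient_annihilator⟩

end Annihilator

namespace CategoryTheory.ProjectiveResolution

variable {C : Type*} [Category C] [Abelian C] {X : C} (P : ProjectiveResolution X)

/-- Exactness of `Hom(P, N)` in degree `k + 1`, that is `Ext^{k+1}(X, N) = 0` computed by `P`. -/
def HomExactSucc (N : C) (k : ℕ) : Prop :=
  ∀ φ : P.complex.X (k + 1) ⟶ N, P.complex.d (k + 2) (k + 1) ≫ φ = 0 →
    ∃ ψ : P.complex.X k ⟶ N, P.complex.d (k + 1) k ≫ ψ = φ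

variable {P}

lemma homExactSucc_of_isZero_ext {A : Type*} [Ring A] [Linear A C] [EnoughProjectives C]
    {N : C} {k : ℕ} (h : IsZero (((Ext A C (k + 1)).obj (Opposite.op X)).obj N)) :
    P.HomExactSucc N k := by
  have hex : (P.complex.linearYonedaObj A N).ExactAt (k + 1) :=
    (HomologicalComplex.exactAt_iff_isZero_homology _ _).mpr (h.of_iso (P.isoExt (k + 1) N).symm)
  rw [HomologicalComplex.exactAt_iff' _ k (k + 1) (k + 2) (by simp) (by simp)] at hex
  exact fun φ hφ => (ShortComplex.moduleCat_exact_iff _).mp hex φ hφ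

variable {S : ShortComplex C} (hS : S.ShortExact)
include hS

lemma exists_d_comp_comp_f_eq {j : ℕ} (h₁ : P.HomExactSucc S.X₁ j)
    (φ : P.complex.X j ⟶ S.X₂) (hφ : P.complex.d (j + 1) j ≫ φ ≫ S.g = 0) :
    ∃ ξ : P.complex.X j ⟶ S.X₁, P.complex.d (j + 1) j ≫ ξ ≫ S.f = P.complex.d (j + 1) j ≫ φ := by
  have := hS.mono_f
  obtain ⟨χ, hχ⟩ : ∃ χ, χ ≫ S.f = P.complex.d (j + 1) j ≫ φ :=
    ⟨hS.exact.lift _ (by rw [Category.assoc, hφ]), hS.exact.lift_f _ _⟩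
  have hχd : P.complex.d (j + 2) (j + 1) ≫ χ = 0 := by
    rw [← cancel_mono S.f, Category.assoc, hχ, HomologicalComplex.d_comp_d_assoc, zero_comp,
      zero_comp]
  obtain ⟨ξ, hξ⟩ := h₁ χ hχd
  exact ⟨ξ, by rw [← Category.assoc, hξ, hχ]⟩

lemma homExactSucc_of_shortExact {k : ℕ} (h₁ : P.HomExactSucc S.X₁ (k + 1))
    (h₂ : P.HomExactSucc S.X₂ k) : P.HomExactSucc S.X₃ k := by
  intro φ hφ
  have := hS.epi_g
  obtain ⟨ξ, hξ⟩ := exists_d_comp_comp_f_eq hS h₁ (Projective.factorThru φ S.g)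
    (by rw [Projective.factorThru_comp, hφ])
  obtain ⟨ψ, hψ⟩ := h₂ (Projective.factorThru φ S.g - ξ ≫ S.f)
    (by rw [Preadditive.comp_sub, hξ, sub_self])
  refine ⟨ψ ≫ S.g, ?_⟩
  rw [← Category.assoc, hψ, Preadditive.sub_comp, Projective.factorThru_comp, Category.assoc,
    S.zero, comp_zero, sub_zero]

lemma exists_comp_g_eq_of_shortExact (h₁ : P.HomExactSucc S.X₁ 0) (φ : X ⟶ S.X₃) :
    ∃ ψ : X ⟶ S.X₂, ψ ≫ S.g = φ := by
  have := hS.epi_g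
  let ε : P.complex.X 0 ⟶ X := P.π.f 0
  have : Epi ε := inferInstanceAs (Epi (P.π.f 0))
  have hε : P.complex.d 1 0 ≫ ε = 0 := P.complex_d_comp_π_f_zero
  let ψ₀ := Projective.factorThru (ε ≫ φ) S.g
  obtain ⟨ξ, hξ⟩ := exists_d_comp_comp_f_eq hS h₁ ψ₀
    (by rw [Projective.factorThru_comp, reassoc_of% hε, zero_comp])
  obtain ⟨ψ, hψ⟩ : ∃ ψ : X ⟶ S.X₂, ε ≫ ψ = ψ₀ - ξ ≫ S.f :=
    ⟨_, (Cofork.IsColimit.desc' P.isColimitCokernelCofork (ψ₀ - ξ ≫ S.f)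
      (by rw [Preadditive.comp_sub, hξ, sub_self, zero_comp])).2⟩
  refine ⟨ψ, ?_⟩
  rw [← cancel_epi ε, reassoc_of% hψ, Preadditive.sub_comp, Projective.factorThru_comp,
    Category.assoc, S.zero, comp_zero, sub_zero]

end CategoryTheory.ProjectiveResolution

universe v

section QuotientShortComplex

variable {R} {M : Type v} [AddCommGroup M] [Module R M] (I : Ideal R) (r : R)

noncomputable abbrev quotientSupSpanMap :
    (M ⧸ (I • ⊤ : Submodule R M)) →ₗ[R] M ⧸ ((I ⊔ Ideal.span {r}) • ⊤ : Submodule R M) :=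
  Submodule.mapQ _ _ LinearMap.id (Submodule.smul_mono_left le_sup_left)

lemma exact_lsmul_quotientSupSpanMap :
    Function.Exact (LinearMap.lsmul R (M ⧸ (I • ⊤ : Submodule R M)) r)
      (quotientSupSpanMap (M := M) I r) := by
  intro x
  obtain ⟨c, rfl⟩ := Submodule.Quotient.mk_surjective _ x
  simp only [Submodule.mapQ_apply, LinearMap.id_apply, Submodule.Quotient.mk_eq_zero,
    Submodule.sup_smul, Submodule.ideal_span_singleton_smul, Submodule.mem_sup,
    Submodule.mem_smul_pointwise_iff_exists]
  constructor
  · rintro ⟨y, hy, _, ⟨m, -, rfl⟩, rfl⟩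
    refine ⟨Submodule.Quotient.mk m, ?_⟩
    rw [LinearMap.lsmul_apply, ← Submodule.Quotient.mk_smul, Submodule.Quotient.eq]
    simpa using neg_mem hy
  · rintro ⟨x, hx⟩
    obtain ⟨m, rfl⟩ := Submodule.Quotient.mk_surjective _ x
    rw [LinearMap.lsmul_apply, ← Submodule.Quotient.mk_smul, Submodule.Quotient.eq] at hx
    exact ⟨c - r • m, by rw [← neg_sub]; exact neg_mem hx, _, ⟨m, trivial, rfl⟩, sub_add_cancel _ _⟩

noncomputable abbrev smulQuotientShortComplex : ShortComplex (ModuleCat.{v} R) :=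
  ModuleCat.shortComplexOfCompEqZero (LinearMap.lsmul R _ r) (quotientSupSpanMap I r)
    (exact_lsmul_quotientSupSpanMap (M := M) I r).linearMap_comp_eq_zero

variable {I r} in
lemma IsSMulRegular.smulQuotientShortComplex_shortExact
    (hr : IsSMulRegular (M ⧸ (I • ⊤ : Submodule R M)) r) :
    (smulQuotientShortComplex (M := M) I r).ShortExact :=
  ModuleCat.shortComplex_shortExact _ (exact_lsmul_quotientSupSpanMap I r) hr fun y => by
    obtain ⟨c, rfl⟩ := Submodule.Quotient.mk_surjective _ y
    exact ⟨Submodule.Quotient.mk c, rfl⟩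

end QuotientShortComplex

section SemidualizingModulo

variable {R} {C : Type u} [AddCommGroup C] [Module R C]
  (P : ProjectiveResolution (ModuleCat.of R C))

/-- `R ⧸ I ≅ Hom_R(C, C ⧸ IC)` through the homotheties and `Ext^{>0}_R(C, C ⧸ IC) = 0`:
the conditions making `C ⧸ IC` a semidualizing `R ⧸ I`-module. -/
structure SemidualizingModulo (I : Ideal R) : Prop where
  annihilator_le : Module.annihilator R (C ⧸ (I • ⊤ : Submodule R C)) ≤ I
  exists_eq_smul_mkQ : ∀ f : C →ₗ[R] C ⧸ (I • ⊤ : Submodule R C),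
    ∃ s : R, f = s • (I • ⊤ : Submodule R C).mkQ
  homExactSucc : ∀ k, P.HomExactSucc (ModuleCat.of R (C ⧸ (I • ⊤ : Submodule R C))) k

variable {P}

lemma semidualizingModulo_bot (hC : IsSemidualizing R C) : SemidualizingModulo P ⊥ := by
  obtain ⟨-, hbij, hext⟩ := hC
  let e : (C ⧸ ((⊥ : Ideal R) • ⊤ : Submodule R C)) ≃ₗ[R] C :=
    Submodule.quotEquivOfEqBot _ (Submodule.bot_smul _)
  refine ⟨fun s hs => ?_, fun f => ?_, fun k => ?_⟩
  · refine (Submodule.mem_bot R).mpr (hbij.1 (LinearMap.ext fun c => ?_))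
    simpa [e] using congrArg e (Module.mem_annihilator.mp hs (Submodule.Quotient.mk c))
  · obtain ⟨s, hs⟩ := hbij.2 (e.toLinearMap ∘ₗ f)
    refine ⟨s, LinearMap.ext fun c => e.injective ?_⟩
    simpa [e] using (LinearMap.congr_fun hs c).symm
  · have := hext (k + 1) k.succ_pos
    exact P.homExactSucc_of_isZero_ext ((ModuleCat.isZero_of_subsingleton _).of_iso
      (((Ext R (ModuleCat.{u} R) (k + 1)).obj _).mapIso e.toModuleIso))

variable {I : Ideal R} (G : SemidualizingModulo P I)
include G

lemma SemidualizingModulo.annihilator_eq :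
    Module.annihilator R (C ⧸ (I • ⊤ : Submodule R C)) = I :=
  G.annihilator_le.antisymm fun s hs => Module.mem_annihilator.mpr fun x => by
    obtain ⟨c, rfl⟩ := Submodule.Quotient.mk_surjective _ x
    rw [← Submodule.Quotient.mk_smul, Submodule.Quotient.mk_eq_zero]
    exact Submodule.smul_mem_smul hs Submodule.mem_top

lemma SemidualizingModulo.surjective_lsmul :
    Function.Surjective (LinearMap.lsmul R (C ⧸ (I • ⊤ : Submodule R C))) := fun g => by
  obtain ⟨s, hs⟩ := G.exists_eq_smul_mkQ (g ∘ₗ (I • ⊤ : Submodule R C).mkQ)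
  exact ⟨s, Submodule.linearMap_qext _ (by rw [hs]; rfl)⟩

lemma SemidualizingModulo.isSMulRegular_iff [IsNoetherianRing R] [Module.Finite R C] (a : R) :
    IsSMulRegular (R ⧸ (I • ⊤ : Submodule R R)) a ↔
      IsSMulRegular (C ⧸ (I • ⊤ : Submodule R C)) a := by
  have hI : (I • ⊤ : Submodule R R) = Module.annihilator R (C ⧸ (I • ⊤ : Submodule R C)) := by
    rw [G.annihilator_eq]; simp
  rw [hI]
  exact isSMulRegular_quotient_annihilator_iff G.surjective_lsmul a

lemma SemidualizingModulo.sup_span_singleton {r : R}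
    (hr : IsSMulRegular (C ⧸ (I • ⊤ : Submodule R C)) r) :
    SemidualizingModulo P (I ⊔ Ideal.span {r}) := by
  have hS := hr.smulQuotientShortComplex_shortExact
  refine ⟨fun s hs => ?_, fun f => ?_, fun k =>
    ProjectiveResolution.homExactSucc_of_shortExact hS (G.homExactSucc (k + 1)) (G.homExactSucc k)⟩
  · have := hS.mono_f
    obtain ⟨χ, hχ⟩ : ∃ χ, χ ≫ (smulQuotientShortComplex I r).f =
        ModuleCat.ofHom (s • (I • ⊤ : Submodule R C).mkQ) := ⟨_, hS.exact.lift_f _ (by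
      ext c
      exact Module.mem_annihilator.mp hs (Submodule.Quotient.mk c))⟩
    obtain ⟨t, ht⟩ := G.exists_eq_smul_mkQ χ.hom
    have hst : s - r * t ∈ I := G.annihilator_le <| Module.mem_annihilator.mpr fun x => by
      obtain ⟨c, rfl⟩ := Submodule.Quotient.mk_surjective _ x
      have h := LinearMap.congr_fun (congrArg ModuleCat.Hom.hom hχ) c
      rw [ModuleCat.hom_ofHom, ModuleCat.hom_comp, LinearMap.comp_apply, ht] at h
      rw [sub_smul, mul_smul, sub_eq_zero]
      exact h.symm
    rw [← sub_add_cancel s (r * t)]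
    exact Ideal.add_mem _ (Ideal.mem_sup_left hst)
      (Ideal.mem_sup_right (Ideal.mem_span_singleton.mpr ⟨t, rfl⟩))
  · obtain ⟨ψ, hψ⟩ := ProjectiveResolution.exists_comp_g_eq_of_shortExact hS (G.homExactSucc 0)
      (ModuleCat.ofHom f)
    obtain ⟨t, ht⟩ := G.exists_eq_smul_mkQ ψ.hom
    refine ⟨t, LinearMap.ext fun c => ?_⟩
    have h := LinearMap.congr_fun (congrArg ModuleCat.Hom.hom hψ) c
    rw [ModuleCat.hom_ofHom] at h
    rw [← h, ModuleCat.hom_comp, LinearMap.comp_apply, ht]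
    rfl

end SemidualizingModulo

section Faithful

variable {R}

theorem Submodule.smul_top_eq_top_iff {M : Type*} [AddCommGroup M] [Module R M]
    [Module.Finite R M] [FaithfulSMul R M] {I : Ideal R} :
    I • (⊤ : Submodule R M) = ⊤ ↔ I = ⊤ := by
  refine ⟨fun h => ?_, fun h => by rw [h, Submodule.top_smul]⟩
  obtain ⟨a, ha, ha0⟩ :=
    Submodule.exists_sub_one_mem_and_smul_eq_zero_of_fg_of_le_smul I ⊤ Module.Finite.fg_top h.ge
  obtain rfl : a = 0 := FaithfulSMul.eq_of_smul_eq_smul fun m => by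
    rw [ha0 m trivial, zero_smul]
  exact (Ideal.eq_top_iff_one I).mpr (by simpa using I.neg_mem ha)

end Faithful

section RegularSequence

open RingTheory.Sequence

variable {R} {C : Type u} [AddCommGroup C] [Module R C] (hC : IsSemidualizing R C)
include hC

lemma semidualizingModulo_ofList (P : ProjectiveResolution (ModuleCat.of R C)) {rs : List R}
    (hrs : IsWeaklyRegular C rs) : SemidualizingModulo P (Ideal.ofList rs) := by
  induction rs using List.reverseRecOn with
  | nil => simpa using semidualizingModulo_bot hC
  | append_singleton rs a ih =>
    obtain ⟨h, ha⟩ := (isWeaklyRegular_append_iff C rs [a]).mp hrs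
    rw [Ideal.ofList_append, Ideal.ofList_singleton]
    exact (ih h).sup_span_singleton ((isWeaklyRegular_singleton_iff _ a).mp ha)

lemma isWeaklyRegular_iff_of_isSemidualizing [IsNoetherianRing R] (rs : List R) :
    IsWeaklyRegular R rs ↔ IsWeaklyRegular C rs := by
  have := hC.1
  let P := projectiveResolution (ModuleCat.of R C)
  induction rs using List.reverseRecOn with
  | nil => exact ⟨fun _ => .nil R C, fun _ => .nil R R⟩
  | append_singleton rs a ih =>
    simp only [isWeaklyRegular_append_iff _ rs [a], isWeaklyRegular_singleton_iff]
    constructor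
    · rintro ⟨h, ha⟩
      exact ⟨ih.mp h, ((semidualizingModulo_ofList hC P (ih.mp h)).isSMulRegular_iff a).mp ha⟩
    · rintro ⟨h, ha⟩
      exact ⟨ih.mpr h, ((semidualizingModulo_ofList hC P h).isSMulRegular_iff a).mpr ha⟩

end RegularSequence

theorem stmt7 [IsNoetherianRing R] (C : Type u) [AddCommGroup C] [Module R C]
    (hC : IsSemidualizing R C) (rs : List R) :
    RingTheory.Sequence.IsRegular R rs ↔ RingTheory.Sequence.IsRegular C rs := by
  have := hC.1
  have : FaithfulSMul R C := ⟨fun h => hC.2.1.1 (LinearMap.ext h)⟩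
  rw [RingTheory.Sequence.isRegular_iff, RingTheory.Sequence.isRegular_iff,
    isWeaklyRegular_iff_of_isSemidualizing hC, ne_comm, ne_comm (a := ⊤), ne_eq, ne_eq,
    Submodule.smul_top_eq_top_iff, Submodule.smul_top_eq_top_iff]
end

section
/- Let M be an R-module and r ∈ R a non-unit that is a non-zero divisor on both R and M. If 0 → M → I^0 → I^1 → ⋯ is a minimal injective resolution of M with differentials d^i, then there is a natural R/(r)-isomorphism M/rM ≅ Hom_R(R/(r), im d^0), and 0 → Hom_R(R/(r), I^1) → Hom_R(R/(r), I^2) → ⋯ is a minimal injective resolution of the R/(r)-module M/rM. -/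
/-!
Write `T X = {x ∈ X | r • x = 0} ≅ Hom_R(R/(r), X)`. Since `r` is regular on `M` and `J 0` is an
essential extension of `M`, `r` is regular on `J 0`; being injective, `J 0` is also `r`-divisible,
so `r` acts bijectively on it. Dividing `f x` by `r` and applying `d 0` gives a map
`M/rM → T (im d⁰)`, bijective by exactness at `J 0`. The `r`-divisibility of every `J n` makes `T`
exact on `J 1 → J 2 → ⋯`; `T` preserves injectivity (as a right adjoint of restriction of scalars),
and essentiality passes to the submodules `T (J n)`.
-/

open CategoryTheory

universe u

variable (R : Type u) [CommRing R]

/-- `0 → M → J 0 → J 1 → ⋯` (with augmentation `f` and differentials `d`) is a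
minimal injective resolution of `M` over `S`. -/
def IsMinimalInjectiveResolution (S : Type u) [CommRing S]
    (M : Type u) [AddCommGroup M] [Module S M]
    (J : ℕ → Type u) [∀ n, AddCommGroup (J n)] [∀ n, Module S (J n)]
    (f : M →ₗ[S] J 0) (d : ∀ n, J n →ₗ[S] J (n + 1)) : Prop :=
  (∀ n, Module.Injective S (J n)) ∧ Function.Injective f ∧
    LinearMap.range f = LinearMap.ker (d 0) ∧
    (∀ n, LinearMap.range (d n) = LinearMap.ker (d (n + 1))) ∧
    (∀ N : Submodule S (J 0), N ≠ ⊥ → N ⊓ LinearMap.range f ≠ ⊥) ∧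
    ∀ n, ∀ N : Submodule S (J (n + 1)), N ≠ ⊥ → N ⊓ LinearMap.range (d n) ≠ ⊥

open Submodule

section Torsion

variable {R : Type*} [CommRing R]
variable {A B C : Type*} [AddCommGroup A] [Module R A] [AddCommGroup B] [Module R B]
  [AddCommGroup C] [Module R C]

theorem Module.Injective.smul_surjective [Small.{v} R] {I : Type v} [AddCommGroup I] [Module R I]
    [Module.Injective R I] {r : R} (hr : r ∈ nonZeroDivisors R) :
    Function.Surjective (r • · : I → I) := by
  intro z
  obtain ⟨h, hh⟩ := Module.Injective.extension_property R I R R (LinearMap.lsmul R R r)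
    (fun a b hab => by simpa using (mul_cancel_left_mem_nonZeroDivisors hr).mp (by simpa using hab))
    (LinearMap.toSpanSingleton R I z)
  refine ⟨h 1, ?_⟩
  show r • h 1 = z
  rw [← map_smul, smul_eq_mul, mul_one]
  simpa using LinearMap.congr_fun hh 1

theorem IsSMulRegular.of_essential {f : A →ₗ[R] B} (hf : Function.Injective f)
    (hess : ∀ N : Submodule R B, N ≠ ⊥ → N ⊓ LinearMap.range f ≠ ⊥) {r : R}
    (hA : IsSMulRegular A r) : IsSMulRegular B r := by
  rw [isSMulRegular_iff_torsionBy_eq_bot] at hA ⊢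
  by_contra hB
  refine hess _ hB (eq_bot_iff.mpr ?_)
  rintro _ ⟨hx, x, rfl⟩
  rw [SetLike.mem_coe, mem_torsionBy_iff, ← map_smul, ← f.map_zero] at hx
  have : x ∈ torsionBy R A r := hf hx
  rw [hA, mem_bot] at this
  simp [this]

variable (r : R)

def torsionByMap (g : A →ₗ[R] B) :
    torsionBy R A r →ₗ[R ⧸ Ideal.span {r}] torsionBy R B r :=
  (g.restrict fun x hx => by
    rw [mem_torsionBy_iff] at hx ⊢; rw [← map_smul, hx, map_zero]).extendScalarsOfSurjective
    Ideal.Quotient.mk_surjective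

@[simp]
theorem coe_torsionByMap_apply (g : A →ₗ[R] B) (x : torsionBy R A r) :
    (torsionByMap r g x : B) = g x :=
  rfl

theorem Module.Injective.torsionBy [Small.{v} R] {I : Type v} [AddCommGroup I] [Module R I]
    [Module.Injective R I] :
    Module.Injective (R ⧸ Ideal.span {r}) (Submodule.torsionBy R I r) := by
  refine ⟨fun X Y _ _ _ _ g hg h => ?_⟩
  let _ := Module.compHom X (Ideal.Quotient.mk (Ideal.span {r}))
  let _ := Module.compHom Y (Ideal.Quotient.mk (Ideal.span {r}))
  have : IsScalarTower R (R ⧸ Ideal.span {r}) X :=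
    ⟨fun a b x => by rw [Algebra.smul_def, mul_smul]; rfl⟩
  have : IsScalarTower R (R ⧸ Ideal.span {r}) Y :=
    ⟨fun a b x => by rw [Algebra.smul_def, mul_smul]; rfl⟩
  obtain ⟨H, hH⟩ := Module.Injective.extension_property R I X Y (g.restrictScalars R) hg
    ((Submodule.torsionBy R I r).subtype ∘ₗ h.restrictScalars R)
  have hHr : ∀ y, H y ∈ Submodule.torsionBy R I r := fun y => by
    rw [mem_torsionBy_iff, ← map_smul]
    show H (Ideal.Quotient.mk (Ideal.span {r}) r • y) = 0
    rw [Ideal.Quotient.mk_singleton_self, zero_smul, map_zero]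
  exact ⟨(H.codRestrict _ hHr).extendScalarsOfSurjective Ideal.Quotient.mk_surjective,
    fun x => Subtype.ext (LinearMap.congr_fun hH x)⟩

theorem mem_ker_torsionByMap {g : A →ₗ[R] B} {x : torsionBy R A r} :
    x ∈ LinearMap.ker (torsionByMap r g) ↔ (x : A) ∈ LinearMap.ker g := by
  simp [← Subtype.val_inj (a := torsionByMap r g x)]

theorem torsionByMap_injective {g : A →ₗ[R] B} (hg : Function.Injective g) :
    Function.Injective (torsionByMap r g) :=
  fun _ _ h => Subtype.ext (hg (congrArg Subtype.val h))

theorem mem_range_torsionByMap_subtype {N : Submodule R B} {z : torsionBy R B r} :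
    z ∈ LinearMap.range (torsionByMap r N.subtype) ↔ (z : B) ∈ N := by
  refine ⟨?_, fun hz => ⟨⟨⟨z, hz⟩, ?_⟩, rfl⟩⟩
  · rintro ⟨y, rfl⟩
    exact (y : N).2
  · exact Subtype.ext (mem_torsionBy_iff _ _ |>.mp z.2)

theorem mem_range_torsionByMap_iff {h : A →ₗ[R] B} {g : B →ₗ[R] C}
    (hA : Function.Surjective (r • · : A → A)) (hexact : LinearMap.range h = LinearMap.ker g)
    {z : torsionBy R C r} :
    z ∈ LinearMap.range (torsionByMap r g) ↔ (z : C) ∈ LinearMap.range g := by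
  refine ⟨fun ⟨y, hy⟩ => ⟨y, by rw [← hy]; rfl⟩, fun ⟨y, hy⟩ => ?_⟩
  have hry : r • y ∈ LinearMap.range h := by
    rw [hexact, LinearMap.mem_ker, map_smul, hy, (mem_torsionBy_iff _ _).mp z.2]
  obtain ⟨w, hw⟩ := hry
  obtain ⟨w', rfl⟩ := hA w
  have hker : h w' ∈ LinearMap.ker g := hexact ▸ LinearMap.mem_range_self h w'
  refine ⟨⟨y - h w', ?_⟩, Subtype.ext ?_⟩
  · rw [mem_torsionBy_iff, smul_sub, ← map_smul, hw, sub_self]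
  · change g (y - h w') = z
    rw [map_sub, hy, LinearMap.mem_ker.mp hker, sub_zero]

theorem torsionBy_inf_ne_bot {K : Submodule R B}
    (hess : ∀ N : Submodule R B, N ≠ ⊥ → N ⊓ K ≠ ⊥)
    {L : Submodule (R ⧸ Ideal.span {r}) (torsionBy R B r)}
    (hL : ∀ x : torsionBy R B r, (x : B) ∈ K → x ∈ L)
    {N : Submodule (R ⧸ Ideal.span {r}) (torsionBy R B r)} (hN : N ≠ ⊥) : N ⊓ L ≠ ⊥ := by
  have hN' : (N.restrictScalars R).map (torsionBy R B r).subtype ≠ ⊥ := by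
    rwa [ne_eq, ← map_bot (torsionBy R B r).subtype,
      (map_injective_of_injective (injective_subtype _)).eq_iff, restrictScalars_eq_bot_iff]
  obtain ⟨_, hx, hx0⟩ := (Submodule.ne_bot_iff _).mp (hess _ hN')
  obtain ⟨⟨x, hxN, rfl⟩, hxK⟩ := Submodule.mem_inf.mp hx
  exact (Submodule.ne_bot_iff _).mpr
    ⟨x, Submodule.mem_inf.mpr ⟨hxN, hL x hxK⟩, fun h => hx0 (by simp [h])⟩

end Torsion


section Connecting

variable {R : Type*} [CommRing R] (r : R)
variable {M J₀ J₁ : Type*} [AddCommGroup M] [Module R M] [AddCommGroup J₀] [Module R J₀]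
  [AddCommGroup J₁] [Module R J₁] {f : M →ₗ[R] J₀} {d : J₀ →ₗ[R] J₁}

-- `x ↦ d (r⁻¹ • f x)`, which kills `rM` because it lands in the `r`-torsion.
noncomputable def connectingMap (hbij : Function.Bijective (r • · : J₀ → J₀))
    (hfd : LinearMap.range f ≤ LinearMap.ker d) :
    (M ⧸ (Ideal.span {r} • (⊤ : Submodule R M))) →ₗ[R ⧸ Ideal.span {r}]
      torsionBy R (LinearMap.range d) r :=
  let e := LinearEquiv.ofBijective (LinearMap.lsmul R J₀ r) hbij
  let δ : M →ₗ[R] torsionBy R (LinearMap.range d) r :=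
    (d.rangeRestrict ∘ₗ e.symm.toLinearMap ∘ₗ f).codRestrict _ fun x => by
      rw [mem_torsionBy_iff, ← map_smul, LinearMap.comp_apply, LinearMap.comp_apply, map_smul,
        LinearEquiv.coe_coe, show e.symm (r • f x) = f x from e.symm_apply_eq.mpr rfl]
      exact Subtype.ext (hfd (LinearMap.mem_range_self f x))
  (Submodule.liftQ (Ideal.span {r} • ⊤) δ (Submodule.smul_le.mpr fun a ha x _ => by
    obtain ⟨c, rfl⟩ := Ideal.mem_span_singleton'.mp ha
    simp [mul_smul])).extendScalarsOfSurjective Ideal.Quotient.mk_surjective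

theorem connectingMap_mk (hbij : Function.Bijective (r • · : J₀ → J₀))
    (hfd : LinearMap.range f ≤ LinearMap.ker d) {x : M} {y : J₀} (hy : r • y = f x) :
    ((connectingMap r hbij hfd (Submodule.Quotient.mk x) : LinearMap.range d) : J₁) = d y := by
  show d ((LinearEquiv.ofBijective (LinearMap.lsmul R J₀ r) hbij).symm (f x)) = d y
  rw [LinearEquiv.symm_apply_eq _ |>.mpr hy.symm]

theorem connectingMap_bijective (hbij : Function.Bijective (r • · : J₀ → J₀))
    (hf : Function.Injective f) (hexact : LinearMap.range f = LinearMap.ker d) :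
    Function.Bijective (connectingMap r hbij hexact.le) := by
  constructor
  · rw [← LinearMap.ker_eq_bot, eq_bot_iff]
    intro q hq
    obtain ⟨x, rfl⟩ := Submodule.Quotient.mk_surjective _ q
    obtain ⟨y, hy⟩ := hbij.2 (f x)
    have hdy : y ∈ LinearMap.ker d := by
      rw [LinearMap.mem_ker, ← connectingMap_mk r hbij hexact.le hy, LinearMap.mem_ker.mp hq]
      rfl
    obtain ⟨x', rfl⟩ := hexact ▸ hdy
    rw [mem_bot, Submodule.Quotient.mk_eq_zero, hf (hy.symm.trans (map_smul f r x').symm)]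
    exact Submodule.smul_mem_smul (Ideal.mem_span_singleton_self r) mem_top
  · rintro ⟨⟨_, y, rfl⟩, hw⟩
    have hry : r • y ∈ LinearMap.range f := by
      rw [hexact, LinearMap.mem_ker, map_smul]
      exact congrArg Subtype.val ((mem_torsionBy_iff _ _).mp hw)
    obtain ⟨x, hx⟩ := hry
    exact ⟨Submodule.Quotient.mk x, Subtype.ext (Subtype.ext (connectingMap_mk r hbij _ hx.symm))⟩

end Connecting

theorem stmt12 (M : Type u) [AddCommGroup M] [Module R M]
    (r : R) (hrR : r ∈ nonZeroDivisors R)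
    (hrM : ∀ x : M, r • x = 0 → x = 0)
    (J : ℕ → Type u) [∀ n, AddCommGroup (J n)] [∀ n, Module R (J n)]
    (f : M →ₗ[R] J 0) (d : ∀ n, J n →ₗ[R] J (n + 1))
    (hres : IsMinimalInjectiveResolution R M J f d) :
    Nonempty ((M ⧸ (Ideal.span {r} • (⊤ : Submodule R M))) ≃ₗ[R ⧸ Ideal.span {r}]
      Submodule.torsionBy R ↥(LinearMap.range (d 0)) r) ∧
    ∃ (f' : (M ⧸ (Ideal.span {r} • (⊤ : Submodule R M))) →ₗ[R ⧸ Ideal.span {r}]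
        Submodule.torsionBy R (J 1) r)
      (d' : ∀ n, Submodule.torsionBy R (J (n + 1)) r →ₗ[R ⧸ Ideal.span {r}]
        Submodule.torsionBy R (J (n + 2)) r),
      (∀ (x : M) (y : J 0), r • y = f x →
        (f' (Submodule.Quotient.mk x) : J 1) = d 0 y) ∧
      (∀ (n : ℕ) (x : Submodule.torsionBy R (J (n + 1)) r),
        ((d' n x : J (n + 2))) = d (n + 1) (x : J (n + 1))) ∧
      IsMinimalInjectiveResolution (R ⧸ Ideal.span {r})
        (M ⧸ (Ideal.span {r} • (⊤ : Submodule R M)))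
        (fun n => Submodule.torsionBy R (J (n + 1)) r) f' d' := by
  obtain ⟨hinj, hf, hexact0, hexact, hess0, hess⟩ := hres
  have hdiv n : Function.Surjective (r • · : J n → J n) :=
    have := hinj n
    Module.Injective.smul_surjective hrR
  have hreg : IsSMulRegular (J 0) r :=
    (isSMulRegular_iff_right_eq_zero_of_smul.mpr hrM).of_essential hf hess0
  let G := connectingMap r ⟨hreg, hdiv 0⟩ hexact0.le
  have hG : Function.Bijective G := connectingMap_bijective r ⟨hreg, hdiv 0⟩ hf hexact0
  let f' := torsionByMap r (LinearMap.range (d 0)).subtype ∘ₗ G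
  let d' n := torsionByMap r (d (n + 1))
  have hf'range z : z ∈ LinearMap.range f' ↔ (z : J 1) ∈ LinearMap.range (d 0) := by
    rw [LinearMap.range_comp_of_range_eq_top _ (LinearMap.range_eq_top.mpr hG.2)]
    exact mem_range_torsionByMap_subtype r
  have hd'range n z :
      z ∈ LinearMap.range (d' n) ↔ (z : J (n + 2)) ∈ LinearMap.range (d (n + 1)) :=
    mem_range_torsionByMap_iff r (hdiv n) (hexact n)
  refine ⟨⟨LinearEquiv.ofBijective G hG⟩, f', d',
    fun _ _ hy => connectingMap_mk r _ hexact0.le hy, fun _ _ => rfl,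
    fun n => have := hinj (n + 1); Module.Injective.torsionBy r,
    (torsionByMap_injective r (injective_subtype _)).comp hG.1, ?_, fun n => ?_,
    fun _ hN => torsionBy_inf_ne_bot r (hess 0) (fun z => (hf'range z).mpr) hN,
    fun n _ hN => torsionBy_inf_ne_bot r (hess (n + 1)) (fun z => (hd'range n z).mpr) hN⟩
  · ext z
    rw [hf'range, hexact 0, mem_ker_torsionByMap]
  · ext z
    rw [hd'range, hexact (n + 1), mem_ker_torsionByMap]
end

section
/- Let C be a semidualizing R-module over a Noetherian ring R and p a prime ideal. An R_p-module M is C_p-injective if and only if M is isomorphic to the localization at p of some C-injective R-module. -/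
open CategoryTheory

universe u

variable (R : Type u) [CommRing R]

/-!
Over a Noetherian ring, localization preserves injectivity, and an injective `Rₚ`-module is
already injective over `R`. Since `C` is finitely presented, `Hom_R(C, I)ₚ ≅ Hom_{Rₚ}(Cₚ, Iₚ)`,
so localizing `Hom_R(C, I)` gives a `Cₚ`-injective module; conversely `Hom_{Rₚ}(Cₚ, J)` is the
localization of the `C`-injective module `Hom_R(C, J)`.
-/

universe v w

section

variable {R} (S : Submonoid R)

theorem Module.Injective.of_isLocalization {A : Type v} [CommRing A] [Algebra R A]
    [IsLocalization S A] {Q : Type w} [AddCommGroup Q] [Module R Q] [Module A Q]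
    [IsScalarTower R A Q] [Small.{w} A] [Module.Injective A Q] : Module.Injective R Q := by
  -- Baer: a map on `I ⊆ R` extends to the localized ideal `Iₛ ⊆ A`, and from there to all of `A`.
  refine Module.Baer.injective fun I g => ?_
  have := isLocalizedModule_id S Q A
  have hu := IsLocalizedModule.map_units (S := S) (LinearMap.id : Q →ₗ[R] Q)
  let ι := I.toLocalized' A S (Algebra.linearMap R A)
  let gₛ : I.localized' A S (Algebra.linearMap R A) →ₗ[A] Q :=
    (IsLocalizedModule.lift S ι g hu).extendScalarsOfIsLocalization S A
  obtain ⟨g', hg'⟩ := Module.Baer.of_injective ‹_› _ gₛ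
  refine ⟨g'.restrictScalars R ∘ₗ Algebra.linearMap R A, fun x hx => ?_⟩
  have hxₛ : algebraMap R A x ∈ I.localized' A S (Algebra.linearMap R A) :=
    ⟨x, hx, 1, IsLocalizedModule.mk'_one _ _ _⟩
  calc g' (algebraMap R A x) = gₛ ⟨_, hxₛ⟩ := hg' _ hxₛ
    _ = g ⟨x, hx⟩ := IsLocalizedModule.lift_apply S ι g hu ⟨x, hx⟩

noncomputable def LocalizedModule.linearMapEquiv (C : Type*) [AddCommGroup C] [Module R C]
    [Module.FinitePresentation R C] {I I' : Type*} [AddCommGroup I] [Module R I]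
    [AddCommGroup I'] [Module R I'] [Module (Localization S) I']
    [IsScalarTower R (Localization S) I'] (g : I →ₗ[R] I') [IsLocalizedModule S g] :
    LocalizedModule S (C →ₗ[R] I) ≃ₗ[Localization S]
      (LocalizedModule S C →ₗ[Localization S] I') :=
  (IsLocalizedModule.iso S (IsLocalizedModule.mapExtendScalars S
    (LocalizedModule.mkLinearMap S C) g (Localization S))).extendScalarsOfIsLocalization S
      (Localization S)

variable {C : Type u} [AddCommGroup C] [Module R C]

theorem IsCInjective.of_linearEquiv {M N : Type u} [AddCommGroup M] [Module R M]
    [AddCommGroup N] [Module R N] (h : IsCInjective R C N) (e : M ≃ₗ[R] N) :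
    IsCInjective R C M :=
  let ⟨I, _, _, hI, ⟨e'⟩⟩ := h
  ⟨I, _, _, hI, ⟨e.trans e'⟩⟩

theorem IsCInjective.localizedModule [IsNoetherianRing R] [Module.Finite R C] {N : Type u}
    [AddCommGroup N] [Module R N] (h : IsCInjective R C N) :
    IsCInjective (Localization S) (LocalizedModule S C) (LocalizedModule S N) := by
  obtain ⟨I, _, _, hI, ⟨e⟩⟩ := h
  have := Module.finitePresentation_of_finite R C
  have : Module.Injective (Localization S) (LocalizedModule S I) :=
    Module.injective_of_isLocalizedModule S (LocalizedModule.mkLinearMap S I)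
  exact ⟨LocalizedModule S I, _, _, this,
    ⟨(IsLocalizedModule.mapEquiv S (LocalizedModule.mkLinearMap S N)
      (LocalizedModule.mkLinearMap S _) (Localization S) e).trans
        (LocalizedModule.linearMapEquiv S C (LocalizedModule.mkLinearMap S I))⟩⟩

theorem IsCInjective.exists_linearEquiv_localizedModule [Module.FinitePresentation R C]
    {M : Type u} [AddCommGroup M] [Module (Localization S) M]
    (h : IsCInjective (Localization S) (LocalizedModule S C) M) :
    ∃ (N : Type u) (_ : AddCommGroup N) (_ : Module R N),
      IsCInjective R C N ∧ Nonempty (M ≃ₗ[Localization S] LocalizedModule S N) := by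
  obtain ⟨J, _, _, hJ, ⟨e⟩⟩ := h
  let : Module R J := Module.compHom J (algebraMap R (Localization S))
  have : IsScalarTower R (Localization S) J := .of_algebraMap_smul fun _ _ => rfl
  have := isLocalizedModule_id S J (Localization S)
  exact ⟨C →ₗ[R] J, _, _, ⟨J, _, _, .of_isLocalization S (A := Localization S), ⟨.refl _ _⟩⟩,
    ⟨e.trans (LocalizedModule.linearMapEquiv S C LinearMap.id).symm⟩⟩

end

theorem stmt17 [IsNoetherianRing R] (C : Type u) [AddCommGroup C] [Module R C]
    (hC : IsSemidualizing R C) (p : Ideal R) [p.IsPrime]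
    (M : Type u) [AddCommGroup M] [Module (Localization p.primeCompl) M] :
    IsCInjective (Localization p.primeCompl) (LocalizedModule p.primeCompl C) M ↔
      ∃ (N : Type u) (_ : AddCommGroup N) (_ : Module R N),
        IsCInjective R C N ∧
        Nonempty (M ≃ₗ[Localization p.primeCompl] LocalizedModule p.primeCompl N) := by
  have := hC.1
  have := Module.finitePresentation_of_finite R C
  refine ⟨IsCInjective.exists_linearEquiv_localizedModule p.primeCompl, ?_⟩
  rintro ⟨N, _, _, hN, ⟨e⟩⟩
  exact (hN.localizedModule p.primeCompl).of_linearEquiv e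
end
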